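/- Assume T^P eliminates imaginaries. Let A ⊆ C be a set with P^A ≺ P^C, and let a be a tuple in C. Then the following are equivalent: (i) A is complete and tp(a/A) ∈ S_*(A); (ii) dcl(A ∪ a) ∩ P^C = P^A; (iii) acl(A ∪ a) ∩ P^C = P^A. -/

import Mathlib

open FirstOrder FirstOrder.Language Cardinal

universe u

namespace OverPredicate

variable (L : FirstOrder.Language.{u, u}) (C : Type u) [L.Structure C] [L.IsRelational]
variable (P : L.Relations 1)

/-- The set of realizations of the distinguished predicate `P` in the monster model `C`. -/
def Pset : Set C := { x | Structure.RelMap P ![x] }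

/-- The induced `L`-structure on a subset of the monster model
(the language is relational, so every subset is a substructure). -/
def setStructure (A : Set C) : L.Structure A where
  funMap := fun f _ => isEmptyElim f
  RelMap := fun r x => Structure.RelMap r (fun i => (x i : C))

/-- Realization of a formula in the structure induced on a subset `A` of the monster. -/
def RealizeIn (A : Set C) {α : Type*} (φ : L.Formula α) (v : α → A) : Prop :=
  letI := setStructure L C A
  φ.Realize v

/-- Satisfaction of a sentence in the structure induced on a subset of the monster. -/
def SatIn (A : Set C) (σ : L.Sentence) : Prop :=
  RealizeIn L C A σ (fun e => isEmptyElim e)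

/-- `A ≡ B`: the substructures of `C` with universes `A` and `B` are elementarily
equivalent, i.e. `Th(C|_A) = Th(C|_B)`. -/
def ElemEquivSets (A B : Set C) : Prop := ∀ σ : L.Sentence, SatIn L C A σ ↔ SatIn L C B σ

/-- `A ≺ B` for subsets of the monster model. -/
def ElemSubset (A B : Set C) : Prop :=
  ∃ h : A ⊆ B, ∀ (m : ℕ) (φ : L.Formula (Fin m)) (x : Fin m → A),
    RealizeIn L C A φ x ↔ RealizeIn L C B φ (fun i => ⟨(x i : C), h (x i).2⟩)

/-- `M ≺ C`: the subset `M` is the universe of an elementary submodel of the monster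
model; in particular `M ⊨ T`. -/
def ElemInC (M : Set C) : Prop :=
  ∀ (m : ℕ) (φ : L.Formula (Fin m)) (x : Fin m → M),
    RealizeIn L C M φ x ↔ φ.Realize (fun i => (x i : C))

/-- Formulas with parameters in `A` and `n` free variables. -/
def FormulaOver (A : Set C) (n : ℕ) :=
  Σ m : ℕ, L.Formula (Fin n ⊕ Fin m) × (Fin m → A)

/-- The tuple `c` realizes (in the monster) the formula `χ` with parameters in `A`. -/
def Realizes (A : Set C) {n : ℕ} (c : Fin n → C) (χ : FormulaOver L C A n) : Prop :=
  χ.2.1.Realize (Sum.elim c (fun i => (χ.2.2 i : C)))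

/-- The complete type of the tuple `c` over the set `A`. -/
def typeOf (A : Set C) {n : ℕ} (c : Fin n → C) : Set (FormulaOver L C A n) :=
  { χ | Realizes L C A c χ }

/-- `c` realizes the partial type `p` over `A`. -/
def RealizesAll (A : Set C) {n : ℕ} (c : Fin n → C) (p : Set (FormulaOver L C A n)) : Prop :=
  ∀ χ ∈ p, Realizes L C A c χ

/-- A partial type over `A` is consistent iff it is realized in the monster model. -/
def Consistent (A : Set C) {n : ℕ} (p : Set (FormulaOver L C A n)) : Prop :=
  ∃ c : Fin n → C, RealizesAll L C A c p

/-- `A ⊆ C` is complete: whenever `C ⊨ (∃ x̄ ⊆ P) ψ(x̄, b̄)` with `b̄` from `A`, there is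
a witness `ā` from `P ∩ A`. -/
def IsComplete (A : Set C) : Prop :=
  ∀ (k m : ℕ) (ψ : L.Formula (Fin k ⊕ Fin m)) (b : Fin m → C), (∀ i, b i ∈ A) →
    (∃ x : Fin k → C, (∀ i, x i ∈ Pset L C P) ∧ ψ.Realize (Sum.elim x b)) →
    ∃ a : Fin k → C, (∀ i, a i ∈ Pset L C P ∩ A) ∧ ψ.Realize (Sum.elim a b)

/-- `S_*(A)`: complete types over `A` (in `n` variables) weakly orthogonal to `P`. -/
def SStar (A : Set C) (n : ℕ) : Set (Set (FormulaOver L C A n)) :=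
  { p | ∃ c : Fin n → C, p = typeOf L C A c ∧
      Pset L C P ∩ (A ∪ Set.range c) = Pset L C P ∩ A ∧
      IsComplete L C P (A ∪ Set.range c) }

/-- `A` is stable over `P`: for every `A'` elementarily equivalent to `A`,
`|S_*(A')| ≤ |A'| ^ |T|`. -/
def IsStableSet (A : Set C) : Prop :=
  ∀ B : Set C, ElemEquivSets L C A B →
    #(Σ n : ℕ, ↥(SStar L C P B n)) ≤ #↥B ^ (Language.card L + ℵ₀)

/-- `T` is fully stable over `P`: every complete set is stable over `P`. -/
def FullyStable : Prop := ∀ A : Set C, IsComplete L C P A → IsStableSet L C P A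

/-- `T` is fully stable over `N ⊨ T^P`: every complete set with `P`-part `N` is stable. -/
def FullyStableOverSet (N : Set C) : Prop :=
  ∀ A : Set C, IsComplete L C P A → Pset L C P ∩ A = N → IsStableSet L C P A

/-- `A` has the existence property over `P`. -/
def HasExistence (A : Set C) : Prop :=
  ∃ M : Set C, ElemInC L C M ∧ A ⊆ M ∧ Pset L C P ∩ M = Pset L C P ∩ A

/-- Hypothesis 1: (i) `P` is stably embedded; (ii) `0`-definable subsets of `P^C` are
`0`-definable in the induced structure `C^P`; (iii) `T` has quantifier elimination. -/
def Hypothesis1 : Prop :=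
  (∀ (k m : ℕ) (ψ : L.Formula (Fin k ⊕ Fin m)) (a : Fin k → C),
    ∃ (l : ℕ) (θ : L.Formula (Fin m ⊕ Fin l)) (c : Fin l → C),
      (∀ i, c i ∈ Pset L C P) ∧
      ∀ y : Fin m → C, (∀ i, y i ∈ Pset L C P) →
        (ψ.Realize (Sum.elim a y) ↔ θ.Realize (Sum.elim y c))) ∧
  (∀ (m : ℕ) (φ : L.Formula (Fin m)),
    (∀ x : Fin m → C, φ.Realize x → ∀ i, x i ∈ Pset L C P) →
    ∃ θ : L.Formula (Fin m),
      ∀ x : Fin m → ↥(Pset L C P),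
        (φ.Realize (fun i => (x i : C)) ↔ RealizeIn L C (Pset L C P) θ x)) ∧
  (∀ (m : ℕ) (φ : L.Formula (Fin m)), ∃ θ : L.Formula (Fin m),
    θ.IsQF ∧ ∀ x : Fin m → C, (φ.Realize x ↔ θ.Realize x))

/-- A system of uniform defining formulas `Ψ_ψ(ȳ, z̄)`, one for each `ψ(x̄, ȳ)`. -/
def UniformDefs :=
  ∀ (k m : ℕ), L.Formula (Fin k ⊕ Fin m) → Σ l : ℕ, L.Formula (Fin m ⊕ Fin l)

/-- `U` is a system of uniform definitions of `ψ`-types over `P`. -/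
def IsUniformDefs (U : UniformDefs L) : Prop :=
  ∀ (k m : ℕ) (ψ : L.Formula (Fin k ⊕ Fin m)) (a : Fin k → C),
    ∃ c : Fin (U k m ψ).1 → C, (∀ i, c i ∈ Pset L C P) ∧
      ∀ y : Fin m → C, (∀ i, y i ∈ Pset L C P) →
        (ψ.Realize (Sum.elim a y) ↔ (U k m ψ).2.Realize (Sum.elim y c))

/-- Semantic implication between partial types over `A`. -/
def ImpliesSet (A : Set C) {n : ℕ} (r p : Set (FormulaOver L C A n)) : Prop :=
  ∀ c : Fin n → C, RealizesAll L C A c r → RealizesAll L C A c p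

/-- The restriction `p ↾ φ` of a type to instances (or negated instances) of `φ`. -/
def restrictTo (A : Set C) {n : ℕ} (p : Set (FormulaOver L C A n)) (m : ℕ)
    (φ : L.Formula (Fin n ⊕ Fin m)) : Set (FormulaOver L C A n) :=
  { χ ∈ p | ∃ b : Fin m → A, χ = ⟨m, φ, b⟩ ∨ χ = ⟨m, φ.not, b⟩ }

/-- A type over `A` is locally isolated if each of its restrictions `p ↾ φ` is
implied by a single formula in `p`. -/
def LocallyIsolated (A : Set C) {n : ℕ} (p : Set (FormulaOver L C A n)) : Prop :=
  ∀ (m : ℕ) (φ : L.Formula (Fin n ⊕ Fin m)),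
    ∃ θ ∈ p, ImpliesSet L C A {θ} (restrictTo L C A p m φ)

/-- A type `p` is `λ`-isolated if it is implied by a subset of size `< λ`. -/
def LambdaIsolated (A : Set C) {n : ℕ} (lam : Cardinal.{u})
    (p : Set (FormulaOver L C A n)) : Prop :=
  ∃ r ⊆ p, #↥r < lam ∧ ImpliesSet L C A r p

/-- `D` is locally constructible over `B`. -/
def LocallyConstructible (B D : Set C) : Prop :=
  B ⊆ D ∧ ∃ (α : Ordinal.{u}) (d : Ordinal.{u} → C),
    D = B ∪ d '' Set.Iio α ∧
    ∀ i < α, LocallyIsolated L C (B ∪ d '' Set.Iio i)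
      (typeOf L C (B ∪ d '' Set.Iio i) (fun _ : Fin 1 => d i))

/-- Relativized universal quantification: `(∀ z̄ ⊆ P) θ(·, z̄)`. -/
noncomputable def pAlls {α : Type*} (l : ℕ) (θ : L.Formula (α ⊕ Fin l)) : L.Formula α :=
  Formula.iAlls (Fin l)
    ((List.finRange l).foldr
      (fun j acc => (Relations.formula P ![Term.var (Sum.inr j)]).imp acc) θ)

/-- Relativized existential quantification: `(∃ z̄ ⊆ P) θ(·, z̄)`. -/
noncomputable def pExs {α : Type*} (l : ℕ) (θ : L.Formula (α ⊕ Fin l)) : L.Formula α :=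
  Formula.iExs (Fin l)
    ((List.finRange l).foldr
      (fun j acc => (Relations.formula P ![Term.var (Sum.inr j)]) ⊓ acc) θ)

/-- Standardize a formula `ψ(x̄, ȳ, z̄)` to the shape `ψ(w̄, z̄)` used for uniform definitions. -/
def psiStd {n m l : ℕ} (ψ : L.Formula ((Fin n ⊕ Fin m) ⊕ Fin l)) :
    L.Formula (Fin (n + m) ⊕ Fin l) :=
  ψ.relabel (Sum.map (⇑finSumFinEquiv) id)

/-- The number of parameters of the uniform definition of `ψ`. -/
def defLen (U : UniformDefs L) {n m l : ℕ} (ψ : L.Formula ((Fin n ⊕ Fin m) ⊕ Fin l)) : ℕ :=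
  (U (n + m) l (psiStd L ψ)).1

/-- The uniform defining formula `Ψ_ψ(z̄, w̄)` for `ψ(x̄, ȳ, z̄)`. -/
def defFml (U : UniformDefs L) {n m l : ℕ} (ψ : L.Formula ((Fin n ⊕ Fin m) ⊕ Fin l)) :
    L.Formula (Fin l ⊕ Fin (defLen L U ψ)) :=
  (U (n + m) l (psiStd L ψ)).2

/-- Combine two parameter tuples into one. -/
def combParams {γ : Type*} {m l : ℕ} (b : Fin m → γ) (d : Fin l → γ) : Fin (m + l) → γ :=
  fun i => Sum.elim b d (finSumFinEquiv.symm i)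

/-- The formula `(∀ z̄ ⊆ P) [ψ(x̄, ȳ, z̄) ↔ Ψ_ψ(z̄, w̄)]`, with free variables `x̄` and
parameter slots `ȳ w̄`. -/
noncomputable def eqDefFormula (U : UniformDefs L) {n m l : ℕ}
    (ψ : L.Formula ((Fin n ⊕ Fin m) ⊕ Fin l)) :
    L.Formula (Fin n ⊕ Fin (m + defLen L U ψ)) :=
  pAlls L P l
    ((ψ.relabel (fun v => match v with
        | Sum.inl (Sum.inl i) => Sum.inl (Sum.inl i)
        | Sum.inl (Sum.inr j) => Sum.inl (Sum.inr (Fin.castAdd (defLen L U ψ) j))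
        | Sum.inr z => Sum.inr z)).iff
      ((defFml L U ψ).relabel (fun v => match v with
        | Sum.inl z => Sum.inr z
        | Sum.inr j => Sum.inl (Sum.inr (Fin.natAdd m j)))))

/-- The formula `[(∃ z̄ ⊆ P) ψ(x̄, ȳ, z̄)] → ψ(x̄, ȳ, z̄')`, with free variables `x̄` and
parameter slots `ȳ z̄'`. -/
noncomputable def exImpFormula {n m l : ℕ}
    (ψ : L.Formula ((Fin n ⊕ Fin m) ⊕ Fin l)) :
    L.Formula (Fin n ⊕ Fin (m + l)) :=
  (pExs L P l (ψ.relabel (fun v => match v with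
      | Sum.inl (Sum.inl i) => Sum.inl (Sum.inl i)
      | Sum.inl (Sum.inr j) => Sum.inl (Sum.inr (Fin.castAdd l j))
      | Sum.inr z => Sum.inr z))).imp
    (ψ.relabel (fun v => match v with
      | Sum.inl (Sum.inl i) => Sum.inl i
      | Sum.inl (Sum.inr j) => Sum.inr (Fin.castAdd l j)
      | Sum.inr z => Sum.inr (Fin.natAdd m z)))

/-- `r` is a `Δ`-type over `A`. -/
def IsDeltaType (A : Set C) {n : ℕ} (Δ : Set (Σ m : ℕ, L.Formula (Fin n ⊕ Fin m)))
    (r : Set (FormulaOver L C A n)) : Prop :=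
  ∀ χ ∈ r, ∃ ψ ∈ Δ, ∃ b : Fin ψ.1 → A,
    χ = ⟨ψ.1, ψ.2, b⟩ ∨ χ = ⟨ψ.1, ψ.2.not, b⟩

/-- `r` and `s` are explicitly contradictory. -/
def ExplicitlyContradictory (A : Set C) {n : ℕ}
    (r s : Set (FormulaOver L C A n)) : Prop :=
  ∃ (m : ℕ) (ψ : L.Formula (Fin n ⊕ Fin m)) (b : Fin m → A),
    (⟨m, ψ, b⟩ : FormulaOver L C A n) ∈ r ∧ (⟨m, ψ.not, b⟩ : FormulaOver L C A n) ∈ s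

/-- The rank `R^n_A(p, Δ₁, Δ₂, λ) ≥ β` (for finite `β`), relative to a fixed system `U`
of uniform defining formulas. -/
noncomputable def RankGE (U : UniformDefs L) (A : Set C) (n : ℕ)
    (Δ₁ : Set (Σ m : ℕ, L.Formula (Fin n ⊕ Fin m)))
    (Δ₂ : Set (Σ m : ℕ, Σ l : ℕ, L.Formula ((Fin n ⊕ Fin m) ⊕ Fin l)))
    (lam : Cardinal.{u}) : ℕ → Set (FormulaOver L C A n) → Prop
  | 0, p => Consistent L C A p
  | (β + 1), p =>
      if Even β then
        ∀ μ : Ordinal.{u}, μ.card < lam → ∀ q ⊆ p, q.Finite →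
          ∃ r : { i : Ordinal.{u} // i ≤ μ } → Set (FormulaOver L C A n),
            (∀ i, IsDeltaType L C A Δ₁ (r i)) ∧
            (∀ i j, i ≠ j → ExplicitlyContradictory L C A (r i) (r j)) ∧
            (∀ i, RankGE U A n Δ₁ Δ₂ lam β (q ∪ r i))
      else
        ∀ μ : Ordinal.{u}, μ.card < lam → ∀ q ⊆ p, q.Finite →
          ∀ ψ : { i : Ordinal.{u} // i ≤ μ } →
              (Σ m : ℕ, Σ l : ℕ, L.Formula ((Fin n ⊕ Fin m) ⊕ Fin l)),
            (∀ i, ψ i ∈ Δ₂) →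
            ∀ b : ∀ i, Fin (ψ i).1 → A,
              ∃ d : ∀ i, Fin (defLen L U (ψ i).2.2) → ↥(Pset L C P ∩ A),
                RankGE U A n Δ₁ Δ₂ lam β
                  (q ∪ Set.range fun i =>
                    (⟨(ψ i).1 + defLen L U (ψ i).2.2, eqDefFormula L P U (ψ i).2.2,
                      combParams (b i) (fun j => (⟨(d i j : C), (d i j).2.2⟩ : A))⟩ :
                      FormulaOver L C A n))

/-- The definable closure of `A` in the monster model. -/
def dclSet (A : Set C) : Set C :=
  { b | ∃ (k : ℕ) (φ : L.Formula (Fin 1 ⊕ Fin k)) (a : Fin k → A),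
      φ.Realize (Sum.elim (fun _ => b) (fun i => (a i : C))) ∧
      ∀ b' : C, φ.Realize (Sum.elim (fun _ => b') (fun i => (a i : C))) → b' = b }

/-- The algebraic closure of `A` in the monster model. -/
def aclSet (A : Set C) : Set C :=
  { b | ∃ (k : ℕ) (φ : L.Formula (Fin 1 ⊕ Fin k)) (a : Fin k → A),
      φ.Realize (Sum.elim (fun _ => b) (fun i => (a i : C))) ∧
      { b' : C | φ.Realize (Sum.elim (fun _ => b') (fun i => (a i : C))) }.Finite }

/-- `T^P` eliminates imaginaries: every subset of a power of `P^C` definable with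
parameters in the induced structure `C^P` has a code there. -/
def EliminatesImaginariesP : Prop :=
  ∀ (n : ℕ) (X : Set (Fin n → ↥(Pset L C P))),
    (∃ (k : ℕ) (ψ : L.Formula (Fin n ⊕ Fin k)) (b : Fin k → ↥(Pset L C P)),
        ∀ x, x ∈ X ↔ RealizeIn L C (Pset L C P) ψ (Sum.elim x b)) →
    ∃ (l : ℕ) (φ : L.Formula (Fin n ⊕ Fin l)) (c : Fin l → ↥(Pset L C P)),
      (∀ x, x ∈ X ↔ RealizeIn L C (Pset L C P) φ (Sum.elim x c)) ∧
      ∀ c' : Fin l → ↥(Pset L C P),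
        (∀ x, x ∈ X ↔ RealizeIn L C (Pset L C P) φ (Sum.elim x c')) → c' = c

/-- The subset `N` of the monster is `λ`-saturated (as an `L`-structure). -/
def IsSaturatedSet (N : Set C) (lam : Cardinal.{u}) : Prop :=
  ∀ p : Set (Σ k : ℕ, L.Formula (Fin 1 ⊕ Fin k) × (Fin k → N)),
    #↥p < lam →
    (∀ q ⊆ p, q.Finite →
       ∃ c : N, ∀ χ ∈ q, RealizeIn L C N χ.2.1 (Sum.elim (fun _ : Fin 1 => c) χ.2.2)) →
    ∃ c : N, ∀ χ ∈ p, RealizeIn L C N χ.2.1 (Sum.elim (fun _ : Fin 1 => c) χ.2.2)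

/-- `f` is a partial elementary map from `D` into the monster model. -/
def PartialElemMap (D : Set C) (f : D → C) : Prop :=
  ∀ (m : ℕ) (φ : L.Formula (Fin m)) (x : Fin m → D),
    φ.Realize (fun i => ((x i) : C)) ↔ φ.Realize (fun i => f (x i))

end OverPredicate

/-! Since `dcl ⊆ acl`, the content is (i) ⇒ (iii) and (ii) ⇒ (i).

(i) ⇒ (iii): let `c ⊨ tp(a/A)` with `A ∪ c` complete and `P ∩ (A ∪ c) = P^A`. The finitely
many `P`-solutions of an algebraic formula over `A ∪ a` are listed by a `P`-tuple; this passes to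
`c`, completeness of `A ∪ c` finds such a list inside `P^A`, and the type carries it back to `a`.

(ii) ⇒ (i): a witness in `P` of a formula over `A ∪ a` is moved into `P^A`. The set of witnesses
is definable in `C^P` (Hypothesis 1), so it has a code there; the code lies in
`dcl(A ∪ a) ∩ P = P^A`, and `P^A ≺ P^C` yields a witness in `P^A`. -/

namespace OverPredicate

section RelativeQuantifiers

variable {L : FirstOrder.Language.{u, u}} {C : Type u} [L.Structure C] {P : L.Relations 1}

theorem realize_relationsFormula_var {α : Type*} (x : α) (v : α → C) :
    (Relations.formula P ![Term.var x]).Realize v ↔ v x ∈ Pset L C P :=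
  Formula.realize_rel₁

theorem realize_foldr_imp_guard {α : Type*} {l : ℕ} (js : List (Fin l))
    (θ : L.Formula (α ⊕ Fin l)) (w : α ⊕ Fin l → C) :
    (js.foldr (fun j acc => (Relations.formula P ![Term.var (Sum.inr j)]).imp acc) θ).Realize w ↔
      ((∀ j ∈ js, w (Sum.inr j) ∈ Pset L C P) → θ.Realize w) := by
  induction js with
  | nil => simp
  | cons j js ih =>
    simp only [List.foldr_cons, Formula.realize_imp, ih, realize_relationsFormula_var,
      List.forall_mem_cons]
    tauto

theorem realize_foldr_inf_guard {α : Type*} {l : ℕ} (js : List (Fin l))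
    (θ : L.Formula (α ⊕ Fin l)) (w : α ⊕ Fin l → C) :
    (js.foldr (fun j acc => Relations.formula P ![Term.var (Sum.inr j)] ⊓ acc) θ).Realize w ↔
      (∀ j ∈ js, w (Sum.inr j) ∈ Pset L C P) ∧ θ.Realize w := by
  induction js with
  | nil => simp
  | cons j js ih =>
    simp only [List.foldr_cons, Formula.realize_inf, ih, realize_relationsFormula_var,
      List.forall_mem_cons, and_assoc]

theorem realize_pAlls {α : Type*} {l : ℕ} (θ : L.Formula (α ⊕ Fin l)) (v : α → C) :
    (pAlls L P l θ).Realize v ↔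
      ∀ z : Fin l → C, (∀ i, z i ∈ Pset L C P) → θ.Realize (Sum.elim v z) := by
  simp only [pAlls, Formula.realize_iAlls, realize_foldr_imp_guard, List.mem_finRange,
    Sum.elim_inr, forall_const]

theorem realize_pExs {α : Type*} {l : ℕ} (θ : L.Formula (α ⊕ Fin l)) (v : α → C) :
    (pExs L P l θ).Realize v ↔
      ∃ z : Fin l → C, (∀ i, z i ∈ Pset L C P) ∧ θ.Realize (Sum.elim v z) := by
  simp only [pExs, Formula.realize_iExs, realize_foldr_inf_guard, List.mem_finRange,
    Sum.elim_inr, forall_const]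

variable (P) in
def relativize {α : Type*} : ∀ {n : ℕ}, L.BoundedFormula α n → L.BoundedFormula α n
  | _, .falsum => .falsum
  | _, .equal t u => .equal t u
  | _, .rel R ts => .rel R ts
  | _, .imp φ ψ => .imp (relativize φ) (relativize ψ)
  | n, .all φ => .all ((P.boundedFormula₁ (Term.var (Sum.inr (Fin.last n)))).imp (relativize φ))

end RelativeQuantifiers

section Induced

variable {L : FirstOrder.Language.{u, u}} {C : Type u} [L.Structure C] [L.IsRelational]

attribute [local instance] setStructure

theorem val_realize_term {α : Type*} {S : Set C} (t : L.Term α) (v : α → S) :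
    ((t.realize v : S) : C) = t.realize (Subtype.val ∘ v) := by
  cases t with
  | var => rfl
  | func f => exact isEmptyElim f

variable {P : L.Relations 1}

theorem realize_relativize {α : Type*} {n : ℕ} (φ : L.BoundedFormula α n)
    (v : α → Pset L C P) (xs : Fin n → Pset L C P) :
    φ.Realize v xs ↔ (relativize P φ).Realize (Subtype.val ∘ v) (Subtype.val ∘ xs) := by
  induction φ with
  | falsum => rfl
  | equal t u =>
    simp only [BoundedFormula.Realize, relativize, ← Subtype.coe_inj, val_realize_term,
      Sum.comp_elim]
  | rel R ts =>
    change Structure.RelMap R (fun i => (((ts i).realize (Sum.elim v xs) : Pset L C P) : C)) ↔ _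
    simp only [val_realize_term, Sum.comp_elim, relativize, BoundedFormula.Realize]
  | imp φ ψ ihφ ihψ => simp only [BoundedFormula.realize_imp, relativize, ihφ, ihψ]
  | all φ ih =>
    simp only [relativize, BoundedFormula.realize_all, BoundedFormula.realize_imp,
      BoundedFormula.realize_rel₁, ih, Fin.comp_snoc, Subtype.forall, Term.realize_var,
      Sum.elim_inr, Fin.snoc_last]
    rfl

theorem realizeIn_iff_realize_relativize {α : Type*} (φ : L.Formula α) (v : α → Pset L C P) :
    RealizeIn L C (Pset L C P) φ v ↔ Formula.Realize (relativize P φ) (Subtype.val ∘ v) := by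
  rw [RealizeIn, Formula.Realize, realize_relativize, Formula.Realize,
    Subsingleton.elim (Subtype.val ∘ default) default]

theorem realizeIn_relabel {S : Set C} {α β : Type*} (φ : L.Formula α) (g : α → β)
    (v : β → S) : RealizeIn L C S (φ.relabel g) v ↔ RealizeIn L C S φ (v ∘ g) :=
  Formula.realize_relabel

end Induced

section Elementary

variable {L : FirstOrder.Language.{u, u}} {C : Type u} [L.Structure C] [L.IsRelational]
  {N M : Set C}

theorem ElemSubset.realizeIn_iff (hNM : ElemSubset L C N M) {α : Type*} [Finite α]
    (φ : L.Formula α) (x : α → N) :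
    RealizeIn L C N φ x ↔ RealizeIn L C M φ (Set.inclusion hNM.1 ∘ x) := by
  obtain ⟨m, ⟨e⟩⟩ := Finite.exists_equiv_fin α
  have h := hNM.2 m (φ.relabel e) (x ∘ e.symm)
  simp only [RealizeIn, Formula.realize_relabel] at h ⊢
  simpa [Function.comp_def] using h

theorem ElemSubset.exists_realizeIn_of_exists (hNM : ElemSubset L C N M) {β γ : Type*}
    [Finite β] [Finite γ] (φ : L.Formula (γ ⊕ β)) (c : β → N)
    (h : ∃ x : γ → M, RealizeIn L C M φ (Sum.elim x (Set.inclusion hNM.1 ∘ c))) :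
    ∃ x : γ → N, RealizeIn L C M φ (Set.inclusion hNM.1 ∘ Sum.elim x c) := by
  have hex := (hNM.realizeIn_iff (Formula.iExs γ (φ.relabel Sum.swap)) c).mpr
  simp only [RealizeIn, Formula.realize_iExs, Formula.realize_relabel, Sum.elim_swap] at hex h
  obtain ⟨x, hx⟩ := hex h
  exact ⟨x, (hNM.realizeIn_iff φ (Sum.elim x c)).mp hx⟩

end Elementary

section Types

variable {L : FirstOrder.Language.{u, u}} {C : Type u} [L.Structure C] {A : Set C} {n : ℕ}

/-- `g` names each free variable by an element of `A` or by a coordinate of the tuple. -/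
theorem realize_comp_iff_of_typeOf_eq {a c : Fin n → C}
    (htp : typeOf L C A a = typeOf L C A c) {α : Type*} [Finite α] (φ : L.Formula α)
    (g : α → A ⊕ Fin n) :
    φ.Realize (Sum.elim Subtype.val a ∘ g) ↔ φ.Realize (Sum.elim Subtype.val c ∘ g) := by
  suffices ∃ (m : ℕ) (g' : α → Fin n ⊕ Fin m) (q : Fin m → A),
      ∀ b : Fin n → C, Sum.elim Subtype.val b ∘ g = Sum.elim b (Subtype.val ∘ q) ∘ g' by
    obtain ⟨m, g', q, hq⟩ := this
    have h : (φ.relabel g').Realize (Sum.elim a (Subtype.val ∘ q)) ↔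
        (φ.relabel g').Realize (Sum.elim c (Subtype.val ∘ q)) :=
      Set.ext_iff.mp htp ⟨m, φ.relabel g', q⟩
    rwa [Formula.realize_relabel, Formula.realize_relabel, ← hq, ← hq] at h
  rcases isEmpty_or_nonempty A with hA | ⟨⟨a₀⟩⟩
  · refine ⟨0, Sum.elim isEmptyElim Sum.inl ∘ g, finZeroElim, fun b => funext fun x => ?_⟩
    rcases hx : g x with u | j
    · exact isEmptyElim u
    · simp [hx]
  · obtain ⟨m, ⟨e⟩⟩ := Finite.exists_equiv_fin α
    refine ⟨m, fun x => Sum.elim (fun _ => Sum.inr (e x)) Sum.inl (g x),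
      fun i => Sum.elim id (fun _ => a₀) (g (e.symm i)), fun b => funext fun x => ?_⟩
    rcases hx : g x with u | j <;> simp [hx]

theorem subset_dclSet : A ⊆ dclSet L C A := fun b hb =>
  ⟨1, Term.equal (Term.var (Sum.inl 0)) (Term.var (Sum.inr 0)), fun _ => ⟨b, hb⟩, rfl,
    fun _ h => h⟩

theorem dclSet_subset_aclSet : dclSet L C A ⊆ aclSet L C A :=
  fun b ⟨k, φ, a, hb, huniq⟩ => ⟨k, φ, a, hb, (Set.finite_singleton b).subset huniq⟩

end Types

section Algebraic

variable {L : FirstOrder.Language.{u, u}} {C : Type u} [L.Structure C]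

noncomputable def pSolutionsAmong (P : L.Relations 1) {k : ℕ} (φ : L.Formula (Fin 1 ⊕ Fin k))
    (t : ℕ) : L.Formula (Fin t ⊕ Fin k) :=
  pAlls L P 1 ((φ.relabel (Sum.elim Sum.inr (Sum.inl ∘ Sum.inr))).imp
    (Formula.iSup fun i : Fin t =>
      Term.equal (Term.var (Sum.inr 0)) (Term.var (Sum.inl (Sum.inl i)))))

theorem realize_pSolutionsAmong {P : L.Relations 1} {k t : ℕ} (φ : L.Formula (Fin 1 ⊕ Fin k))
    (x : Fin t → C) (b : Fin k → C) :
    (pSolutionsAmong P φ t).Realize (Sum.elim x b) ↔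
      ∀ y ∈ Pset L C P, φ.Realize (Sum.elim (fun _ => y) b) → y ∈ Set.range x := by
  have hcomp (z : Fin 1 → C) :
      Sum.elim (Sum.elim x b) z ∘ Sum.elim Sum.inr (Sum.inl ∘ Sum.inr) = Sum.elim z b := by
    ext (_ | _) <;> rfl
  simp only [pSolutionsAmong, realize_pAlls, Formula.realize_imp, Formula.realize_relabel, hcomp,
    Formula.realize_iSup, Formula.realize_equal, Term.realize_var, Sum.elim_inr, Sum.elim_inl,
    Set.mem_range, eq_comm (a := x _)]
  constructor
  · exact fun h y hy => h (fun _ => y) fun _ => hy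
  · intro h z hz
    have hz₀ : z = fun _ => z 0 := funext fun i => congrArg z (Subsingleton.elim i 0)
    rw [hz₀]
    exact h (z 0) (hz 0)

theorem sum_elim_val_mem_union {A : Set C} {n : ℕ} (c : Fin n → C) (r : A ⊕ Fin n) :
    Sum.elim Subtype.val c r ∈ A ∪ Set.range c := by
  rcases r with u | j
  · exact Or.inl u.2
  · exact Or.inr ⟨j, rfl⟩

theorem aclSet_inter_subset_of_typeOf_eq {P : L.Relations 1} {A : Set C} {n : ℕ}
    {a c : Fin n → C} (htp : typeOf L C A a = typeOf L C A c)
    (hPc : Pset L C P ∩ (A ∪ Set.range c) = Pset L C P ∩ A)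
    (hc : IsComplete L C P (A ∪ Set.range c)) :
    aclSet L C (A ∪ Set.range a) ∩ Pset L C P ⊆ Pset L C P ∩ A := by
  rintro d ⟨⟨k, φ, b, hφd, hfin⟩, hdP⟩
  have hnames (i : Fin k) : ∃ r : A ⊕ Fin n, Sum.elim Subtype.val a r = b i :=
    (b i).2.elim (fun h => ⟨.inl ⟨_, h⟩, rfl⟩) fun ⟨j, hj⟩ => ⟨.inr j, hj⟩
  choose g hg using hnames
  have hbg : Sum.elim Subtype.val a ∘ g = fun i => (b i : C) := funext hg
  obtain ⟨t, w, -, hw⟩ := (hfin.inter_of_left (Pset L C P)).fin_param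
  have hA : (pExs L P t ((pSolutionsAmong P φ t).relabel Sum.swap)).Realize
      (Sum.elim Subtype.val a ∘ g) := by
    rw [realize_pExs]
    refine ⟨w, fun i => (hw.subset (Set.mem_range_self i)).2, ?_⟩
    rw [Formula.realize_relabel, Sum.elim_swap, realize_pSolutionsAmong, hbg, hw]
    exact fun y hy hφ => ⟨hφ, hy⟩
  rw [realize_comp_iff_of_typeOf_eq htp, realize_pExs] at hA
  simp only [Formula.realize_relabel, Sum.elim_swap] at hA
  obtain ⟨e, he, hC⟩ := hc t k _ _ (fun i => sum_elim_val_mem_union c (g i)) hA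
  have heA (i : Fin t) : e i ∈ Pset L C P ∩ A := hPc ▸ he i
  have hAe := (realize_comp_iff_of_typeOf_eq htp (pSolutionsAmong P φ t)
    (Sum.elim (fun i => .inl ⟨e i, (heA i).2⟩) g)).mpr
  simp only [Sum.comp_elim] at hAe
  obtain ⟨i, rfl⟩ := (realize_pSolutionsAmong φ e _).mp (hAe hC) d hdP (hbg ▸ hφd)
  exact heA i

end Algebraic

section Complete

variable {L : FirstOrder.Language.{u, u}} {C : Type u} [L.Structure C] [L.IsRelational]
  {P : L.Relations 1}

/-- Stable embeddedness defines the trace with parameters from `P`; Hypothesis 1(ii) moves that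
definition into `C^P`. -/
theorem Hypothesis1.exists_realizeIn_iff (h1 : Hypothesis1 L C P) {k m : ℕ}
    (ψ : L.Formula (Fin k ⊕ Fin m)) (b : Fin m → C) :
    ∃ (l : ℕ) (θ : L.Formula (Fin k ⊕ Fin l)) (c : Fin l → Pset L C P),
      ∀ x : Fin k → Pset L C P, ψ.Realize (Sum.elim (Subtype.val ∘ x) b) ↔
        RealizeIn L C (Pset L C P) θ (Sum.elim x c) := by
  obtain ⟨hse, hind, -⟩ := h1
  obtain ⟨l, θ, c, hcP, hθ⟩ := hse m k (ψ.relabel Sum.swap) b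
  let φ : L.Formula (Fin (k + l)) :=
    Formula.iInf (fun i => Relations.formula P ![Term.var i]) ⊓ θ.relabel finSumFinEquiv
  have hφ (w : Fin (k + l) → C) :
      φ.Realize w ↔ (∀ i, w i ∈ Pset L C P) ∧ θ.Realize (w ∘ finSumFinEquiv) := by
    simp only [φ, Formula.realize_inf, Formula.realize_iInf, realize_relationsFormula_var,
      Formula.realize_relabel]
  obtain ⟨θ', hθ'⟩ := hind (k + l) φ fun w hw => ((hφ w).mp hw).1
  let cP : Fin l → Pset L C P := fun i => ⟨c i, hcP i⟩
  refine ⟨l, θ'.relabel finSumFinEquiv.symm, cP, fun x => ?_⟩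
  have hval : (fun i => ((Sum.elim x cP ∘ finSumFinEquiv.symm) i : C)) ∘ finSumFinEquiv =
      Sum.elim (Subtype.val ∘ x) c := by
    ext (_ | _) <;> simp [cP]
  rw [realizeIn_relabel, ← hθ', hφ, hval, and_iff_right fun i => Subtype.property _,
    ← hθ (Subtype.val ∘ x) fun i => (x i).2, Formula.realize_relabel, Sum.elim_swap]

/-- `c j` is defined over `D` as the `j`-th coordinate of the unique `P`-tuple `w` with
`(∀ x̄ ⊆ P) (ψ(x̄, b̄) ↔ φ^P(x̄, w))`. -/
theorem mem_dclSet_of_unique_parameters {D : Set C} {k m l : ℕ} (ψ : L.Formula (Fin k ⊕ Fin m))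
    {b : Fin m → C} (hb : ∀ i, b i ∈ D) (φ : L.Formula (Fin k ⊕ Fin l))
    {c : Fin l → Pset L C P}
    (hc : ∀ c' : Fin l → Pset L C P,
      (∀ x : Fin k → Pset L C P, ψ.Realize (Sum.elim (Subtype.val ∘ x) b) ↔
        RealizeIn L C (Pset L C P) φ (Sum.elim x c')) ↔ c' = c)
    (j : Fin l) : (c j : C) ∈ dclSet L C D := by
  let δ : L.Formula (Fin 1 ⊕ Fin m) := pExs L P l <| pAlls L P k
      ((ψ.relabel (Sum.elim Sum.inr (Sum.inl ∘ Sum.inl ∘ Sum.inr))).iff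
        (Formula.relabel (Sum.elim Sum.inr (Sum.inl ∘ Sum.inr)) (relativize P φ))) ⊓
      Term.equal (Term.var (Sum.inl (Sum.inl 0))) (Term.var (Sum.inr j))
  have hδ (v : C) : δ.Realize (Sum.elim (fun _ => v) b) ↔ v = c j := by
    have hψ (w : Fin l → C) (x : Fin k → C) :
        Sum.elim (Sum.elim (Sum.elim (fun _ : Fin 1 => v) b) w) x ∘
          Sum.elim Sum.inr (Sum.inl ∘ Sum.inl ∘ Sum.inr) = Sum.elim x b := by
      ext (_ | _) <;> rfl
    have hφ (w : Fin l → C) (x : Fin k → C) :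
        Sum.elim (Sum.elim (Sum.elim (fun _ : Fin 1 => v) b) w) x ∘
          Sum.elim Sum.inr (Sum.inl ∘ Sum.inr) = Sum.elim x w := by
      ext (_ | _) <;> rfl
    simp only [δ, realize_pExs, Formula.realize_inf, realize_pAlls, Formula.realize_iff,
      Formula.realize_relabel, hψ, hφ, Formula.realize_equal, Term.realize_var, Sum.elim_inl,
      Sum.elim_inr]
    constructor
    · rintro ⟨w, hw, hdef, rfl⟩
      refine congrArg (fun c' : Fin l → Pset L C P => (c' j : C))
        ((hc fun i => ⟨w i, hw i⟩).mp fun x => ?_)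
      rw [hdef (Subtype.val ∘ x) fun i => (x i).2, realizeIn_iff_realize_relativize,
        Sum.comp_elim]
      rfl
    · rintro rfl
      refine ⟨Subtype.val ∘ c, fun i => (c i).2, fun x hx => ?_, rfl⟩
      have h := (hc c).mpr rfl fun i => ⟨x i, hx i⟩
      rwa [realizeIn_iff_realize_relativize, Sum.comp_elim] at h
  exact ⟨m, δ, fun i => ⟨b i, hb i⟩, (hδ _).mpr rfl, fun v hv => (hδ v).mp hv⟩

theorem isComplete_of_dclSet_inter_subset (h1 : Hypothesis1 L C P)
    (hEI : EliminatesImaginariesP L C P) {N D : Set C} (hN : ElemSubset L C N (Pset L C P))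
    (hdcl : dclSet L C D ∩ Pset L C P ⊆ N) (hND : N ⊆ D) : IsComplete L C P D := by
  rintro k m ψ b hb ⟨x₀, hx₀P, hx₀⟩
  obtain ⟨l, θ, c, hθ⟩ := h1.exists_realizeIn_iff ψ b
  obtain ⟨l₀, φ, c₀, hdef, huniq⟩ :=
    hEI k {x | ψ.Realize (Sum.elim (Subtype.val ∘ x) b)} ⟨l, θ, c, hθ⟩
  have hc₀N (j : Fin l₀) : (c₀ j : C) ∈ N :=
    hdcl ⟨mem_dclSet_of_unique_parameters ψ hb φ
      (fun c' => ⟨huniq c', by rintro rfl; exact hdef⟩) j, (c₀ j).2⟩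
  obtain ⟨x, hx⟩ := hN.exists_realizeIn_of_exists φ (fun j => ⟨c₀ j, hc₀N j⟩)
    ⟨fun i => ⟨x₀ i, hx₀P i⟩, (hdef _).mp hx₀⟩
  rw [Sum.comp_elim] at hx
  exact ⟨fun i => x i, fun i => ⟨hN.1 (x i).2, hND (x i).2⟩, (hdef _).mpr hx⟩

end Complete

theorem IsComplete.of_superset {L : FirstOrder.Language.{u, u}} {C : Type u} [L.Structure C]
    {P : L.Relations 1} {A D : Set C} (hD : IsComplete L C P D) (hAD : A ⊆ D)
    (hPD : Pset L C P ∩ D ⊆ A) : IsComplete L C P A := by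
  intro k m ψ b hb hex
  obtain ⟨e, he, hψ⟩ := hD k m ψ b (fun i => hAD (hb i)) hex
  exact ⟨e, fun i => ⟨(he i).1, hPD (he i)⟩, hψ⟩

variable (L : FirstOrder.Language.{u, u}) (C : Type u) [L.Structure C] [L.IsRelational]
variable (P : L.Relations 1)

/-- Assume `T^P` eliminates imaginaries, `P^A ≺ P^C`, and let `a` be a
tuple.  Then: `A` is complete and `tp(a/A) ∈ S_*(A)` iff `dcl(A ∪ a) ∩ P^C = P^A` iff
`acl(A ∪ a) ∩ P^C = P^A`. -/
theorem star_types_via_dcl_acl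
    (h1 : Hypothesis1 L C P)
    (hEI : EliminatesImaginariesP L C P)
    (A : Set C) (hPA : ElemSubset L C (Pset L C P ∩ A) (Pset L C P))
    (n : ℕ) (a : Fin n → C) :
    ((IsComplete L C P A ∧ typeOf L C A a ∈ SStar L C P A n) ↔
        dclSet L C (A ∪ Set.range a) ∩ Pset L C P = Pset L C P ∩ A) ∧
    ((IsComplete L C P A ∧ typeOf L C A a ∈ SStar L C P A n) ↔
        aclSet L C (A ∪ Set.range a) ∩ Pset L C P = Pset L C P ∩ A) := by
  have hPA_sub : Pset L C P ∩ A ⊆ A ∪ Set.range a :=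
    Set.inter_subset_right.trans Set.subset_union_left
  have hPA_dcl : Pset L C P ∩ A ⊆ dclSet L C (A ∪ Set.range a) ∩ Pset L C P :=
    fun x hx => ⟨subset_dclSet (hPA_sub hx), hx.1⟩
  have hStar_acl : IsComplete L C P A ∧ typeOf L C A a ∈ SStar L C P A n →
      aclSet L C (A ∪ Set.range a) ∩ Pset L C P = Pset L C P ∩ A := by
    rintro ⟨-, c, htp, hPc, hc⟩
    exact (aclSet_inter_subset_of_typeOf_eq htp hPc hc).antisymm
      (hPA_dcl.trans (Set.inter_subset_inter_left _ dclSet_subset_aclSet))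
  have hAcl_dcl : aclSet L C (A ∪ Set.range a) ∩ Pset L C P = Pset L C P ∩ A →
      dclSet L C (A ∪ Set.range a) ∩ Pset L C P = Pset L C P ∩ A := fun h =>
    ((Set.inter_subset_inter_left _ dclSet_subset_aclSet).trans h.le).antisymm hPA_dcl
  have hDcl_star : dclSet L C (A ∪ Set.range a) ∩ Pset L C P = Pset L C P ∩ A →
      IsComplete L C P A ∧ typeOf L C A a ∈ SStar L C P A n := by
    intro hd
    have hPa : Pset L C P ∩ (A ∪ Set.range a) = Pset L C P ∩ A :=
      Set.Subset.antisymm (fun x hx => hd ▸ ⟨subset_dclSet hx.2, hx.1⟩)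
        (Set.inter_subset_inter_right _ Set.subset_union_left)
    have hcomp := isComplete_of_dclSet_inter_subset h1 hEI hPA hd.le hPA_sub
    exact ⟨hcomp.of_superset Set.subset_union_left (hPa.le.trans Set.inter_subset_right), a, rfl,
      hPa, hcomp⟩
  exact ⟨⟨fun h => hAcl_dcl (hStar_acl h), hDcl_star⟩,
    ⟨hStar_acl, fun h => hDcl_star (hAcl_dcl h)⟩⟩

end OverPredicate
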